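/- arXiv:2603.18490 — 2 statements merged into one kernel-verified Lean document; each statement's English description precedes it below -/
import Mathlib

section
/- Let μ be a finite measure on a measurable space X with total mass γ₀ = μ(X) ∈ (0, ∞), let 0 ≤ a with a·γ₀ < 1, let K > 0, ε > 0, and let g, g₀ be densities with respect to μ such that 2 − 2∫_X √(g·g₀) dμ ≥ K²ε² (i.e., d_H²(g, g₀) ≥ K²ε²). With the shifted densities g_a := a + (1 − aγ₀)·g and g_{0,a} := a + (1 − aγ₀)·g₀, one has 1 − ∫_X √(g_a·g_{0,a}) dμ ≥ [(1 − aγ₀) − 4√(aγ₀(1 − aγ₀))/(K²ε²)]·(1 − ∫_X √(g·g₀) dμ). -/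
/-!
Pointwise, `(a + c u)(a + c v) = (a + c√(uv))² + ac(√u - √v)²`, so
`√(g_a g_{0,a}) ≤ a + c√(g g₀) + √(ac)|√g - √g₀|` with `c = 1 - aγ₀`. Integrating and applying
Cauchy–Schwarz to the last term gives
`∫√(g_a g_{0,a}) ≤ aγ₀ + c ρ + √(aγ₀c) d_H` where `ρ = ∫√(g g₀)` and `d_H² = 2 - 2ρ`.
Finally the separation `K²ε² ≤ d_H² ≤ 2` bounds `d_H` by `2 d_H² / (K²ε²) = 4(1 - ρ)/(K²ε²)`.
-/

open MeasureTheory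

lemma Real.sqrt_add_mul_mul_add_mul_le {a c u v : ℝ} (ha : 0 ≤ a) (hc : 0 ≤ c) (hu : 0 ≤ u)
    (hv : 0 ≤ v) :
    √((a + c * u) * (a + c * v)) ≤ a + c * √(u * v) + √(a * c) * |√u - √v| := by
  rw [Real.sqrt_le_left (by positivity), Real.sqrt_mul hu, add_sq, mul_pow, sq_abs,
    Real.sq_sqrt (mul_nonneg ha hc)]
  have hexpand : (a + c * u) * (a + c * v) = (a + c * (√u * √v)) ^ 2 + a * c * (√u - √v) ^ 2 := by
    linear_combination (-a * c - c ^ 2 * √v ^ 2) * Real.sq_sqrt hu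
      + (-a * c - c ^ 2 * u) * Real.sq_sqrt hv
  have hcross : 0 ≤ 2 * (a + c * (√u * √v)) * (√(a * c) * |√u - √v|) := by positivity
  linarith

lemma Real.sqrt_le_two_mul_div_of_le {x s : ℝ} (hs : 0 < s) (hsx : s ≤ x) (hx : x ≤ 4) :
    √x ≤ 2 * x / s := by
  have hroot : √x ≤ 2 := Real.sqrt_le_iff.2 ⟨zero_le_two, by linarith⟩
  rw [le_div_iff₀ hs]
  calc √x * s ≤ √x * x := by gcongr
    _ ≤ 2 * x := by gcongr; linarith

namespace MeasureTheory

variable {X : Type*} [MeasurableSpace X] {μ : Measure X}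

lemma Integrable.memLp_two_sqrt {f : X → ℝ} (hf : Integrable f μ) (hf0 : 0 ≤ᵐ[μ] f) :
    MemLp (fun x ↦ √(f x)) 2 μ := by
  refine (memLp_two_iff_integrable_sq
    (Real.continuous_sqrt.comp_aestronglyMeasurable hf.aestronglyMeasurable)).2 ?_
  refine hf.congr ?_
  filter_upwards [hf0] with x hx
  exact (Real.sq_sqrt hx).symm

lemma Integrable.sqrt_mul {f h : X → ℝ} (hf : Integrable f μ) (hh : Integrable h μ)
    (hf0 : 0 ≤ᵐ[μ] f) (hh0 : 0 ≤ᵐ[μ] h) :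
    Integrable (fun x ↦ √(f x * h x)) μ := by
  refine ((hf.memLp_two_sqrt hf0).integrable_mul (hh.memLp_two_sqrt hh0)).congr ?_
  filter_upwards [hf0] with x hx
  exact (Real.sqrt_mul hx _).symm

lemma integral_sqrt_sub_sqrt_sq {f h : X → ℝ} (hf : Integrable f μ) (hh : Integrable h μ)
    (hf0 : 0 ≤ᵐ[μ] f) (hh0 : 0 ≤ᵐ[μ] h) :
    ∫ x, (√(f x) - √(h x)) ^ 2 ∂μ = ∫ x, f x ∂μ + ∫ x, h x ∂μ - 2 * ∫ x, √(f x * h x) ∂μ := by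
  rw [← integral_add hf hh, ← integral_const_mul,
    ← integral_sub (f := fun x ↦ f x + h x) (hf.add hh) ((hf.sqrt_mul hh hf0 hh0).const_mul 2)]
  refine integral_congr_ae ?_
  filter_upwards [hf0, hh0] with x hx hy
  rw [Real.sqrt_mul hx]
  linear_combination Real.sq_sqrt hx + Real.sq_sqrt hy

lemma integral_abs_le_sqrt_integral_sq_mul_sqrt_measureReal [IsFiniteMeasure μ] {f : X → ℝ}
    (hf : MemLp f 2 μ) :
    ∫ x, |f x| ∂μ ≤ √(∫ x, f x ^ 2 ∂μ) * √(μ.real Set.univ) := by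
  have hf' : MemLp (fun x ↦ |f x|) (ENNReal.ofReal 2) μ := by
    rw [ENNReal.ofReal_ofNat]; exact hf.abs
  have h1 : MemLp (fun _ ↦ (1 : ℝ)) (ENNReal.ofReal 2) μ := memLp_const 1
  have := integral_mul_le_Lp_mul_Lq_of_nonneg Real.HolderConjugate.two_two
    (ae_of_all _ fun x ↦ abs_nonneg (f x)) (ae_of_all _ fun _ ↦ zero_le_one) hf' h1
  have hsq : ∀ x, |f x| ^ (2 : ℝ) = f x ^ 2 := fun x ↦ by
    rw [Real.rpow_two, sq_abs]
  simp only [mul_one, Real.one_rpow, hsq, integral_const, smul_eq_mul] at this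
  simpa only [Real.sqrt_eq_rpow, one_div] using this

lemma integral_sqrt_add_mul_mul_add_mul_le [IsFiniteMeasure μ] {a c : ℝ} (ha : 0 ≤ a)
    (hc : 0 ≤ c) {f h : X → ℝ} (hf : Integrable f μ) (hh : Integrable h μ) (hf0 : ∀ x, 0 ≤ f x)
    (hh0 : ∀ x, 0 ≤ h x) :
    ∫ x, √((a + c * f x) * (a + c * h x)) ∂μ
      ≤ a * μ.real Set.univ + c * ∫ x, √(f x * h x) ∂μ
        + √(a * c) * (√(∫ x, (√(f x) - √(h x)) ^ 2 ∂μ) * √(μ.real Set.univ)) := by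
  have hdiff : MemLp (fun x ↦ √(f x) - √(h x)) 2 μ :=
    (hf.memLp_two_sqrt (ae_of_all _ hf0)).sub (hh.memLp_two_sqrt (ae_of_all _ hh0))
  have hfh := hf.sqrt_mul hh (ae_of_all _ hf0) (ae_of_all _ hh0)
  have hshifted : Integrable (fun x ↦ √((a + c * f x) * (a + c * h x))) μ :=
    ((integrable_const a).add (hf.const_mul c)).sqrt_mul ((integrable_const a).add (hh.const_mul c))
      (ae_of_all _ fun x ↦ add_nonneg ha (mul_nonneg hc (hf0 x)))
      (ae_of_all _ fun x ↦ add_nonneg ha (mul_nonneg hc (hh0 x)))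
  calc ∫ x, √((a + c * f x) * (a + c * h x)) ∂μ
      ≤ ∫ x, (a + c * √(f x * h x) + √(a * c) * |√(f x) - √(h x)|) ∂μ :=
        integral_mono hshifted
          (((integrable_const a).add (hfh.const_mul c)).add
            ((hdiff.integrable one_le_two).abs.const_mul _))
          fun x ↦ Real.sqrt_add_mul_mul_add_mul_le ha hc (hf0 x) (hh0 x)
    _ = a * μ.real Set.univ + c * ∫ x, √(f x * h x) ∂μ
          + √(a * c) * ∫ x, |√(f x) - √(h x)| ∂μ := by
        rw [integral_add (f := fun x ↦ a + c * √(f x * h x))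
            ((integrable_const a).add (hfh.const_mul c))
            ((hdiff.integrable one_le_two).abs.const_mul _),
          integral_add (integrable_const a) (hfh.const_mul c), integral_const,
          integral_const_mul, integral_const_mul, smul_eq_mul]
        ring
    _ ≤ _ := by
        gcongr
        exact integral_abs_le_sqrt_integral_sq_mul_sqrt_measureReal hdiff

end MeasureTheory

theorem shifted_affinity_ratio_lower_bound_general {X : Type*} [MeasurableSpace X]
    (μ : Measure X) [IsFiniteMeasure μ]
    (γ₀ : ℝ) (hγ₀ : γ₀ = (μ Set.univ).toReal)
    (a : ℝ) (ha : 0 ≤ a) (haγ : a * γ₀ < 1)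
    (K ε : ℝ) (hK : 0 < K) (hε : 0 < ε)
    (g g₀ : X → ℝ)
    (hg0 : ∀ x, 0 ≤ g x) (hg₀0 : ∀ x, 0 ≤ g₀ x)
    (hgi : Integrable g μ) (hg₀i : Integrable g₀ μ)
    (hg1 : ∫ x, g x ∂μ = 1) (hg₀1 : ∫ x, g₀ x ∂μ = 1)
    (hsep : K ^ 2 * ε ^ 2 ≤ 2 - 2 * ∫ x, Real.sqrt (g x * g₀ x) ∂μ) :
    ((1 - a * γ₀) - 4 * Real.sqrt (a * γ₀ * (1 - a * γ₀)) / (K ^ 2 * ε ^ 2))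
        * (1 - ∫ x, Real.sqrt (g x * g₀ x) ∂μ)
      ≤ 1 - ∫ x, Real.sqrt ((a + (1 - a * γ₀) * g x) * (a + (1 - a * γ₀) * g₀ x)) ∂μ := by
  set c := 1 - a * γ₀
  set ρ := ∫ x, √(g x * g₀ x) ∂μ
  have hc : 0 ≤ c := by linarith
  have hγ₀' : μ.real Set.univ = γ₀ := hγ₀.symm
  have hhellinger : ∫ x, (√(g x) - √(g₀ x)) ^ 2 ∂μ = 2 - 2 * ρ := by
    rw [integral_sqrt_sub_sqrt_sq hgi hg₀i (ae_of_all _ hg0) (ae_of_all _ hg₀0), hg1, hg₀1]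
    ring
  have hshift := integral_sqrt_add_mul_mul_add_mul_le ha hc hgi hg₀i hg0 hg₀0
  rw [hhellinger, hγ₀', mul_comm (√(2 - 2 * ρ)), ← mul_assoc,
    ← Real.sqrt_mul (mul_nonneg ha hc), mul_right_comm a] at hshift
  have hρ : 0 ≤ ρ := integral_nonneg fun x ↦ Real.sqrt_nonneg _
  have hroot : √(2 - 2 * ρ) ≤ 2 * (2 - 2 * ρ) / (K ^ 2 * ε ^ 2) :=
    Real.sqrt_le_two_mul_div_of_le (by positivity) hsep (by linarith)
  calc (c - 4 * √(a * γ₀ * c) / (K ^ 2 * ε ^ 2)) * (1 - ρ)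
      = c * (1 - ρ) - √(a * γ₀ * c) * (2 * (2 - 2 * ρ) / (K ^ 2 * ε ^ 2)) := by ring
    _ ≤ c * (1 - ρ) - √(a * γ₀ * c) * √(2 - 2 * ρ) := by gcongr
    _ ≤ 1 - ∫ x, √((a + c * g x) * (a + c * g₀ x)) ∂μ := by linarith

/-- Inequality (3.16): on the event where the Hellinger distance of `(g, g₀)` is at
least `Kε`, the affinity defect of the shifted pair dominates that of the original
pair up to the factor `(1 - aγ₀) - 4√(aγ₀(1 - aγ₀))/(K²ε²)`. -/
theorem shifted_affinity_ratio_lower_bound {X : Type*} [MeasurableSpace X]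
    (μ : Measure X) [IsFiniteMeasure μ]
    (γ₀ : ℝ) (hγ₀ : γ₀ = (μ Set.univ).toReal) (hγpos : 0 < γ₀)
    (a : ℝ) (ha : 0 ≤ a) (haγ : a * γ₀ < 1)
    (K ε : ℝ) (hK : 0 < K) (hε : 0 < ε)
    (g g₀ : X → ℝ) (hgm : Measurable g) (hg₀m : Measurable g₀)
    (hg0 : ∀ x, 0 ≤ g x) (hg₀0 : ∀ x, 0 ≤ g₀ x)
    (hgi : Integrable g μ) (hg₀i : Integrable g₀ μ)
    (hg1 : ∫ x, g x ∂μ = 1) (hg₀1 : ∫ x, g₀ x ∂μ = 1)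
    (hsep : K ^ 2 * ε ^ 2 ≤ 2 - 2 * ∫ x, Real.sqrt (g x * g₀ x) ∂μ) :
    ((1 - a * γ₀) - 4 * Real.sqrt (a * γ₀ * (1 - a * γ₀)) / (K ^ 2 * ε ^ 2))
        * (1 - ∫ x, Real.sqrt (g x * g₀ x) ∂μ)
      ≤ 1 - ∫ x, Real.sqrt ((a + (1 - a * γ₀) * g x) * (a + (1 - a * γ₀) * g₀ x)) ∂μ :=
  shifted_affinity_ratio_lower_bound_general μ γ₀ hγ₀ a ha haγ K ε hK hε g g₀ hg0 hg₀0 hgi hg₀i hg1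
    hg₀1 hsep
end

section
/- Let μ be a σ-finite measure on a measurable space X, let (Θ, 𝒜, ρ) be a probability space, and let G : Θ × X → ℝ be a nonnegative measurable function (with respect to the product σ-algebra) with ∫_X G(θ, x) dμ(x) = 1 for every θ ∈ Θ. Let g₀ be a density with respect to μ and ĝ(x) := ∫_Θ G(θ, x) dρ(θ). Then for every ε > 0, d_H²(g₀, ĝ) ≤ ε² + 2·ρ({θ ∈ Θ : d_H²(g₀, G(θ, ·)) > ε²}). -/
/-!
Since `b ↦ (√a - √b)²` is convex on `[0, ∞)`, Jensen's inequality at each `x` followed by Tonelli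
gives `d_H²(g₀, ĝ) ≤ ∫ d_H²(g₀, G θ) dρ(θ)`. The integrand is at most `ε²` on the Hellinger ball and
at most `2` everywhere, as `(√a - √b)² ≤ a + b` and both arguments are densities.
-/

open MeasureTheory

open scoped ENNReal

section

variable {X Θ : Type*} [MeasurableSpace X] [MeasurableSpace Θ]

noncomputable def hellingerSq (μ : Measure X) (f g : X → ℝ) : ℝ≥0∞ :=
  ∫⁻ x, ENNReal.ofReal ((√(f x) - √(g x)) ^ 2) ∂μ

lemma convexOn_sq_sqrt_sub_sqrt (a : ℝ) :
    ConvexOn ℝ (Set.Ici 0) fun b : ℝ => (√a - √b) ^ 2 := by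
  have h : ConvexOn ℝ (Set.Ici 0) fun b : ℝ => (√a ^ 2 + b) - 2 * √a * √b :=
    ((convexOn_const _ (convex_Ici 0)).add (convexOn_id (convex_Ici 0))).sub
      (Real.strictConcaveOn_sqrt.concaveOn.smul (by positivity : (0 : ℝ) ≤ 2 * √a))
  refine h.congr fun b (hb : 0 ≤ b) => ?_
  dsimp only
  rw [sub_sq, Real.sq_sqrt hb]
  ring

lemma ofReal_sq_sqrt_sub_sqrt_integral_le {ρ : Measure Θ} [IsProbabilityMeasure ρ] {f : Θ → ℝ}
    (hf0 : ∀ θ, 0 ≤ f θ) (hfi : Integrable f ρ) (a : ℝ) :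
    ENNReal.ofReal ((√a - √(∫ θ, f θ ∂ρ)) ^ 2) ≤ ∫⁻ θ, ENNReal.ofReal ((√a - √(f θ)) ^ 2) ∂ρ := by
  have hφi : Integrable (fun θ => (√a - √(f θ)) ^ 2) ρ := by
    refine ((integrable_const (2 * √a ^ 2)).add (hfi.const_mul 2)).mono'
      ((by fun_prop : Continuous fun b : ℝ => (√a - √b) ^ 2).comp_aestronglyMeasurable
        hfi.aestronglyMeasurable) (.of_forall fun θ => ?_)
    rw [Real.norm_of_nonneg (sq_nonneg _), Pi.add_apply]
    nlinarith [sq_nonneg (√a + √(f θ)), Real.sq_sqrt (hf0 θ)]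
  rw [← ofReal_integral_eq_lintegral_ofReal hφi (.of_forall fun θ => sq_nonneg _)]
  exact ENNReal.ofReal_le_ofReal <| (convexOn_sq_sqrt_sub_sqrt a).map_integral_le
    (by fun_prop) isClosed_Ici (.of_forall hf0) hfi hφi

lemma lintegral_ofReal_eq_one_of_integral_eq_one {μ : Measure X} {f : X → ℝ}
    (hf0 : ∀ x, 0 ≤ f x) (hf1 : ∫ x, f x ∂μ = 1) :
    ∫⁻ x, ENNReal.ofReal (f x) ∂μ = 1 := by
  rw [← ofReal_integral_eq_lintegral_ofReal (.of_integral_ne_zero (by simp [hf1]))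
    (.of_forall hf0), hf1, ENNReal.ofReal_one]

lemma hellingerSq_le_two {μ : Measure X} {f g : X → ℝ} (hf0 : ∀ x, 0 ≤ f x) (hg0 : ∀ x, 0 ≤ g x)
    (hf1 : ∫ x, f x ∂μ = 1) (hg1 : ∫ x, g x ∂μ = 1) :
    hellingerSq μ f g ≤ 2 := by
  have hpt : ∀ x, ENNReal.ofReal ((√(f x) - √(g x)) ^ 2)
      ≤ ENNReal.ofReal (f x) + ENNReal.ofReal (g x) := fun x => by
    rw [← ENNReal.ofReal_add (hf0 x) (hg0 x)]
    refine ENNReal.ofReal_le_ofReal ?_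
    nlinarith [Real.sq_sqrt (hf0 x), Real.sq_sqrt (hg0 x), Real.sqrt_nonneg (f x),
      Real.sqrt_nonneg (g x)]
  have hfi : Integrable f μ := .of_integral_ne_zero (by simp [hf1])
  calc hellingerSq μ f g ≤ ∫⁻ x, ENNReal.ofReal (f x) + ENNReal.ofReal (g x) ∂μ :=
        lintegral_mono hpt
    _ = 2 := by
      rw [lintegral_add_left' hfi.aemeasurable.ennreal_ofReal,
        lintegral_ofReal_eq_one_of_integral_eq_one hf0 hf1,
        lintegral_ofReal_eq_one_of_integral_eq_one hg0 hg1, one_add_one_eq_two]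

lemma integrable_uncurry_of_integral_eq_one {μ : Measure X} [SFinite μ] {ρ : Measure Θ}
    [IsFiniteMeasure ρ] {G : Θ → X → ℝ}
    (hGm : AEStronglyMeasurable (Function.uncurry G) (ρ.prod μ)) (hG0 : ∀ θ x, 0 ≤ G θ x)
    (hG1 : ∀ θ, ∫ x, G θ x ∂μ = 1) :
    Integrable (Function.uncurry G) (ρ.prod μ) := by
  refine (integrable_prod_iff hGm).2
    ⟨.of_forall fun θ => .of_integral_ne_zero (by simp [hG1]), ?_⟩
  simp_rw [Function.uncurry_apply_pair, Real.norm_of_nonneg (hG0 _ _), hG1]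
  exact integrable_const 1

lemma hellingerSq_mixture_le {μ : Measure X} [SFinite μ] {ρ : Measure Θ} [IsProbabilityMeasure ρ]
    {G : Θ → X → ℝ} {g : X → ℝ} (hGm : Measurable (Function.uncurry G)) (hg : Measurable g)
    (hG0 : ∀ θ x, 0 ≤ G θ x) (hGi : ∀ᵐ x ∂μ, Integrable (fun θ => G θ x) ρ) :
    hellingerSq μ g (fun x => ∫ θ, G θ x ∂ρ) ≤ ∫⁻ θ, hellingerSq μ g (G θ) ∂ρ :=
  calc hellingerSq μ g (fun x => ∫ θ, G θ x ∂ρ)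
      ≤ ∫⁻ x, ∫⁻ θ, ENNReal.ofReal ((√(g x) - √(G θ x)) ^ 2) ∂ρ ∂μ :=
        lintegral_mono_ae <| hGi.mono fun x hx =>
          ofReal_sq_sqrt_sub_sqrt_integral_le (fun θ => hG0 θ x) hx _
    _ = ∫⁻ θ, hellingerSq μ g (G θ) ∂ρ := lintegral_lintegral_swap (by fun_prop)

lemma lintegral_le_add_mul_measure_lt {ρ : Measure Θ} [IsProbabilityMeasure ρ] {f : Θ → ℝ≥0∞}
    {c : ℝ≥0∞} (hfc : ∀ θ, f θ ≤ c) (a : ℝ≥0∞) :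
    ∫⁻ θ, f θ ∂ρ ≤ a + c * ρ {θ | a < f θ} :=
  calc ∫⁻ θ, f θ ∂ρ ≤ ∫⁻ θ, a + {θ | a < f θ}.indicator (fun _ => c) θ ∂ρ := by
        refine lintegral_mono fun θ => ?_
        by_cases h : a < f θ
        · simpa [h] using le_add_left (hfc θ)
        · simpa [h] using not_lt.1 h
    _ ≤ a + c * ρ {θ | a < f θ} := by
        rw [lintegral_add_left measurable_const, lintegral_const, measure_univ, mul_one]
        gcongr
        exact lintegral_indicator_const_le _ _

end

theorem hellinger_sq_mixture_le_eps_add_mass_general {X Θ : Type*}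
    [MeasurableSpace X] [MeasurableSpace Θ]
    (μ : Measure X) [SigmaFinite μ] (ρ : Measure Θ) [IsProbabilityMeasure ρ]
    (G : Θ → X → ℝ) (hGm : Measurable (Function.uncurry G))
    (hG0 : ∀ θ x, 0 ≤ G θ x) (hG1 : ∀ θ, ∫ x, G θ x ∂μ = 1)
    (g₀ : X → ℝ) (hg₀m : Measurable g₀) (hg₀0 : ∀ x, 0 ≤ g₀ x)
    (hg₀1 : ∫ x, g₀ x ∂μ = 1)
    (ε : ℝ) :
    ∫⁻ x, ENNReal.ofReal ((Real.sqrt (g₀ x) - Real.sqrt (∫ θ, G θ x ∂ρ)) ^ 2) ∂μ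
      ≤ ENNReal.ofReal (ε ^ 2)
        + 2 * ρ {θ | ENNReal.ofReal (ε ^ 2)
            < ∫⁻ x, ENNReal.ofReal ((Real.sqrt (g₀ x) - Real.sqrt (G θ x)) ^ 2) ∂μ} := by
  have hGi : ∀ᵐ x ∂μ, Integrable (fun θ => G θ x) ρ :=
    (integrable_uncurry_of_integral_eq_one hGm.aestronglyMeasurable hG0 hG1).prod_left_ae
  calc hellingerSq μ g₀ (fun x => ∫ θ, G θ x ∂ρ)
      ≤ ∫⁻ θ, hellingerSq μ g₀ (G θ) ∂ρ := hellingerSq_mixture_le hGm hg₀m hG0 hGi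
    _ ≤ _ := lintegral_le_add_mul_measure_lt
        (fun θ => hellingerSq_le_two hg₀0 (hG0 θ) hg₀1 (hG1 θ)) _

/-- Deterministic form of inequality (5.12): the Hellinger risk of the Bayes
estimator `ĝ(x) = ∫ G(θ, x) dρ(θ)` is bounded by `ε²` plus twice the posterior mass
outside the Hellinger ball of radius `ε`. -/
theorem hellinger_sq_mixture_le_eps_add_mass {X Θ : Type*}
    [MeasurableSpace X] [MeasurableSpace Θ]
    (μ : Measure X) [SigmaFinite μ] (ρ : Measure Θ) [IsProbabilityMeasure ρ]
    (G : Θ → X → ℝ) (hGm : Measurable (Function.uncurry G))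
    (hG0 : ∀ θ x, 0 ≤ G θ x) (hG1 : ∀ θ, ∫ x, G θ x ∂μ = 1)
    (g₀ : X → ℝ) (hg₀m : Measurable g₀) (hg₀0 : ∀ x, 0 ≤ g₀ x)
    (hg₀1 : ∫ x, g₀ x ∂μ = 1)
    (ε : ℝ) (hε : 0 < ε) :
    ∫⁻ x, ENNReal.ofReal ((Real.sqrt (g₀ x) - Real.sqrt (∫ θ, G θ x ∂ρ)) ^ 2) ∂μ
      ≤ ENNReal.ofReal (ε ^ 2)
        + 2 * ρ {θ | ENNReal.ofReal (ε ^ 2)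
            < ∫⁻ x, ENNReal.ofReal ((Real.sqrt (g₀ x) - Real.sqrt (G θ x)) ^ 2) ∂μ} :=
  hellinger_sq_mixture_le_eps_add_mass_general μ ρ G hGm hG0 hG1 g₀ hg₀m hg₀0 hg₀1 ε
end
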